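/- For any two stochastic policies π and π' on a finite aperiodic unichain MDP, D_TV(d_{π'} ∥ d_π) ≤ ζ*·E_{s∼d_π}[D_TV(π'∥π)[s]], where ζ* = max_π ‖(I − P_π + P*_π)^{-1}‖_∞ is the maximal ∞-norm of the fundamental matrix over stationary policies. -/

import Mathlib

open Finset

/-- A stochastic policy. -/
def IsPolicy {S A : Type*} [Fintype A] (π : S → A → ℝ) : Prop :=
  (∀ s a, 0 ≤ π s a) ∧ ∀ s, ∑ a, π s a = 1

/-- State transition matrix induced by policy π. -/
def inducedMatrix {S A : Type*} [Fintype A] (P : S → A → S → ℝ) (π : S → A → ℝ) :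
    Matrix S S ℝ :=
  Matrix.of fun s s' => ∑ a, π s a * P s a s'

/-- Stationary distribution of the chain induced by a policy (unichain case,
so entries are only nonnegative). -/
def IsStationaryDist {S A : Type*} [Fintype S] [Fintype A]
    (P : S → A → S → ℝ) (π : S → A → ℝ) (d : S → ℝ) : Prop :=
  (∀ s, 0 ≤ d s) ∧ (∑ s, d s = 1) ∧
    ∀ s', ∑ s, d s * ∑ a, π s a * P s a s' = d s'

/-- ∞-operator norm (maximum absolute row sum) of the fundamental matrix
Z^π = (I − P_π + P*_π)⁻¹. -/
noncomputable def fundNorm {S : Type*} [Fintype S] [DecidableEq S] [Nonempty S]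
    (Pm : Matrix S S ℝ) (d : S → ℝ) : ℝ :=
  Finset.univ.sup' Finset.univ_nonempty
    (fun s => ∑ s', |((1 - Pm + (Matrix.of fun _ j => d j) : Matrix S S ℝ)⁻¹) s s'|)

open Matrix

/-! Write `Z = (I - P' + 1 d'ᵀ)⁻¹`. Since `d P = d`, `d' P' = d'` and `d' - d` has total mass
zero (which kills the rank-one term), `(d' - d) Z⁻¹ = d (P' - P)`, i.e. `d' - d = d (P' - P) Z`.
Taking `ℓ¹` norms of row vectors gives `‖d' - d‖₁ ≤ ‖d (P' - P)‖₁ ‖Z‖_∞`, and as every `P s a`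
is a probability vector, row `s` of `P' - P` has `ℓ¹` norm at most `∑ a, |π' s a - π s a|`. -/

section RowVectorL1

variable {m n : Type*} [Fintype m] [Fintype n]

theorem sum_abs_vecMul_le (u : m → ℝ) (B : Matrix m n ℝ) :
    ∑ k, |(u ᵥ* B) k| ≤ ∑ j, |u j| * ∑ k, |B j k| := by
  calc ∑ k, |(u ᵥ* B) k| ≤ ∑ k, ∑ j, |u j| * |B j k| :=
        sum_le_sum fun k _ => (abs_sum_le_sum_abs _ _).trans_eq (by simp_rw [abs_mul])
    _ = ∑ j, |u j| * ∑ k, |B j k| := by simp_rw [mul_sum]; exact sum_comm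

theorem sum_abs_vecMul_le_mul {u : m → ℝ} {B : Matrix m n ℝ} {c : ℝ}
    (hB : ∀ j, ∑ k, |B j k| ≤ c) : ∑ k, |(u ᵥ* B) k| ≤ (∑ j, |u j|) * c := by
  rw [sum_mul]
  exact (sum_abs_vecMul_le u B).trans
    (sum_le_sum fun j _ => mul_le_mul_of_nonneg_left (hB j) (abs_nonneg _))

end RowVectorL1

theorem vecMul_of_const_row {m n α : Type*} [Fintype m] [Semiring α] (v : m → α) (w : n → α) :
    v ᵥ* (of fun _ j => w j) = (∑ i, v i) • w := by
  ext j
  simp [vecMul, dotProduct, sum_mul]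

section Fundamental

variable {S : Type*} [Fintype S] [DecidableEq S]

theorem vecMul_sub_mul_fundamental {α : Type*} [Ring α] {d d' : S → α} {Q Q' : Matrix S S α}
    (hd : d ᵥ* Q = d) (hd_sum : ∑ s, d s = 1)
    (hd' : d' ᵥ* Q' = d') (hd'_sum : ∑ s, d' s = 1) :
    (d' - d) ᵥ* (1 - Q' + of fun _ j => d' j) = d ᵥ* (Q' - Q) := by
  have h_sum : ∑ s, (d' - d) s = 0 := by simp [sum_sub_distrib, hd_sum, hd'_sum]
  rw [vecMul_add, vecMul_sub, vecMul_one, sub_vecMul, vecMul_of_const_row, h_sum, zero_smul,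
    add_zero, hd', vecMul_sub, hd]
  abel

theorem sum_abs_sub_le_mul_fundNorm [Nonempty S] {d d' : S → ℝ} {Q Q' : Matrix S S ℝ}
    (hd : d ᵥ* Q = d) (hd_sum : ∑ s, d s = 1)
    (hd' : d' ᵥ* Q' = d') (hd'_sum : ∑ s, d' s = 1)
    (hZ : IsUnit (1 - Q' + of fun _ j => d' j : Matrix S S ℝ)) :
    ∑ s, |d' s - d s| ≤ (∑ j, |(d ᵥ* (Q' - Q)) j|) * fundNorm Q' d' := by
  set M : Matrix S S ℝ := 1 - Q' + of fun _ j => d' j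
  have h_diff : d' - d = d ᵥ* (Q' - Q) ᵥ* M⁻¹ := by
    rw [← vecMul_sub_mul_fundamental hd hd_sum hd' hd'_sum, vecMul_vecMul,
      mul_nonsing_inv _ ((isUnit_iff_isUnit_det M).mp hZ), vecMul_one]
  simp only [← Pi.sub_apply d' d, h_diff]
  exact sum_abs_vecMul_le_mul fun j => le_sup' (fun s => ∑ s', |M⁻¹ s s'|) (mem_univ j)

theorem fundNorm_nonneg [Nonempty S] (Q : Matrix S S ℝ) (d : S → ℝ) : 0 ≤ fundNorm Q d :=
  (sum_nonneg fun _ _ => abs_nonneg _).trans <|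
    le_sup' (fun s => ∑ s', |(1 - Q + of fun _ j => d j : Matrix S S ℝ)⁻¹ s s'|)
      (mem_univ (Classical.arbitrary S))

end Fundamental

section InducedMatrix

variable {S A : Type*} [Fintype A] {P : S → A → S → ℝ}

theorem IsStationaryDist.vecMul_inducedMatrix [Fintype S] {π : S → A → ℝ} {d : S → ℝ}
    (hd : IsStationaryDist P π d) : d ᵥ* inducedMatrix P π = d :=
  funext hd.2.2

theorem inducedMatrix_sub (π π' : S → A → ℝ) :
    inducedMatrix P π' - inducedMatrix P π = inducedMatrix P (π' - π) := by
  ext s s'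
  simp [inducedMatrix, ← sum_sub_distrib, sub_mul]

theorem sum_abs_inducedMatrix_le [Fintype S] (hP_nonneg : ∀ s a s', 0 ≤ P s a s')
    (hP_sum : ∀ s a, ∑ s', P s a s' = 1) (f : S → A → ℝ) (s : S) :
    ∑ s', |inducedMatrix P f s s'| ≤ ∑ a, |f s a| :=
  calc ∑ s', |inducedMatrix P f s s'| ≤ ∑ s', ∑ a, |f s a| * P s a s' :=
        sum_le_sum fun s' _ => (abs_sum_le_sum_abs _ _).trans_eq <|
          sum_congr rfl fun a _ => by rw [abs_mul, abs_of_nonneg (hP_nonneg s a s')]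
    _ = ∑ a, |f s a| := by
        rw [sum_comm]
        simp_rw [← mul_sum, hP_sum, mul_one]

end InducedMatrix

theorem stationary_distribution_tv_bound_unichain_general
    {S A : Type*} [Fintype S] [Fintype A] [DecidableEq S] [Nonempty S]
    (P : S → A → S → ℝ)
    (hP_nonneg : ∀ s a s', 0 ≤ P s a s') (hP_sum : ∀ s a, ∑ s', P s a s' = 1)
    (π π' : S → A → ℝ) (hπ' : IsPolicy π')
    (dπ dπ' : S → ℝ)
    (hd : IsStationaryDist P π dπ) (hd' : IsStationaryDist P π' dπ')
    -- fundamental matrices exist (aperiodic unichain)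
    (hZ : ∀ p d, IsPolicy p → IsStationaryDist P p d →
      IsUnit (1 - inducedMatrix P p + Matrix.of fun _ s' => d s' : Matrix S S ℝ))
    -- ζ* = max_π ‖Z^π‖_∞ over stationary policies
    (ζstar : ℝ)
    (hζ_ub : ∀ p d, IsPolicy p → IsStationaryDist P p d →
      fundNorm (inducedMatrix P p) d ≤ ζstar) :
    (1 / 2) * ∑ s, |dπ' s - dπ s|
      ≤ ζstar * ∑ s, dπ s * ((1 / 2) * ∑ a, |π' s a - π s a|) := by
  have h_perturb := sum_abs_sub_le_mul_fundNorm hd.vecMul_inducedMatrix hd.2.1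
    hd'.vecMul_inducedMatrix hd'.2.1 (hZ π' dπ' hπ' hd')
  have h_row : ∑ j, |(dπ ᵥ* (inducedMatrix P π' - inducedMatrix P π)) j|
      ≤ ∑ s, dπ s * ∑ a, |π' s a - π s a| := by
    refine (sum_abs_vecMul_le _ _).trans (sum_le_sum fun s _ => ?_)
    rw [abs_of_nonneg (hd.1 s), inducedMatrix_sub]
    exact mul_le_mul_of_nonneg_left (sum_abs_inducedMatrix_le hP_nonneg hP_sum _ s) (hd.1 s)
  have h_ζ := hζ_ub π' dπ' hπ' hd'
  have h_weighted_nonneg : 0 ≤ ∑ s, dπ s * ∑ a, |π' s a - π s a| :=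
    sum_nonneg fun s _ => mul_nonneg (hd.1 s) (sum_nonneg fun _ _ => abs_nonneg _)
  calc (1 / 2) * ∑ s, |dπ' s - dπ s|
      ≤ (1 / 2) * ((∑ s, dπ s * ∑ a, |π' s a - π s a|) * ζstar) := by
        gcongr
        exact h_perturb.trans (mul_le_mul h_row h_ζ (fundNorm_nonneg _ _) h_weighted_nonneg)
    _ = ζstar * ∑ s, dπ s * ((1 / 2) * ∑ a, |π' s a - π s a|) := by
        simp_rw [mul_left_comm _ (1 / 2 : ℝ), ← mul_sum]
        ring

/-- aperiodic unichain case: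
D_TV(d_{π'} ∥ d_π) ≤ ζ*·E_{s∼d_π}[D_TV(π'∥π)[s]], where
ζ* = max_π ‖(I − P_π + P*_π)⁻¹‖_∞. -/
theorem stationary_distribution_tv_bound_unichain
    {S A : Type*} [Fintype S] [Fintype A] [DecidableEq S] [Nonempty S]
    (P : S → A → S → ℝ)
    (hP_nonneg : ∀ s a s', 0 ≤ P s a s') (hP_sum : ∀ s a, ∑ s', P s a s' = 1)
    (π π' : S → A → ℝ) (hπ : IsPolicy π) (hπ' : IsPolicy π')
    (dπ dπ' : S → ℝ)
    (hd : IsStationaryDist P π dπ) (hd' : IsStationaryDist P π' dπ')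
    -- fundamental matrices exist (aperiodic unichain)
    (hZ : ∀ p d, IsPolicy p → IsStationaryDist P p d →
      IsUnit (1 - inducedMatrix P p + Matrix.of fun _ s' => d s' : Matrix S S ℝ))
    -- ζ* = max_π ‖Z^π‖_∞ over stationary policies
    (ζstar : ℝ)
    (hζ_ub : ∀ p d, IsPolicy p → IsStationaryDist P p d →
      fundNorm (inducedMatrix P p) d ≤ ζstar)
    (hζ_mem : ∃ p d, IsPolicy p ∧ IsStationaryDist P p d ∧
      fundNorm (inducedMatrix P p) d = ζstar) :
    (1 / 2) * ∑ s, |dπ' s - dπ s|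
      ≤ ζstar * ∑ s, dπ s * ((1 / 2) * ∑ a, |π' s a - π s a|) :=
  stationary_distribution_tv_bound_unichain_general P hP_nonneg hP_sum π π' hπ' dπ dπ' hd hd' hZ
    ζstar hζ_ub
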